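/- For the averaging operator A_N along a polynomial P of degree d with positive leading coefficient and f = 𝟙_{{0}}, one has ‖A_N f‖_{ℓ^q} ≥ N^{1/q - 1}. Consequently, if ‖A_N f‖_{ℓ^q} ≤ C N^{-d(1/p - 1/q)} ‖f‖_{ℓ^p} holds for all N, then (d-1)/q ≥ d/p - 1. -/

import Mathlib

open Finset

/-- ℓ^p norm (finite real exponent) of a real-valued function on ℤ. -/
noncomputable def lpNormR (p : ℝ) (f : ℤ → ℝ) : ℝ :=
  (∑' x : ℤ, |f x| ^ p) ^ (1 / p)

/-- Averaging operator along a polynomial `P`. -/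
noncomputable def avgR (P : Polynomial ℤ) (N : ℕ) (f : ℤ → ℝ) (x : ℤ) : ℝ :=
  (N : ℝ)⁻¹ * ∑ k ∈ Finset.Icc (1 : ℤ) (N : ℤ), f (x + P.eval k)

open Filter

/-!
`A_N 𝟙_{0}` puts mass `c(x)/N` at `x`, where `c(x)` counts the `k ∈ [1, N]` with `P(k) = -x`.
Since `c` is `ℕ`-valued with total mass `N` and `n ≤ n^q` on `ℕ` for `q ≥ 1`, we get
`∑ (c/N)^q ≥ N / N^q`, i.e. `‖A_N 𝟙_{0}‖_q ≥ N^{1/q - 1}`. As `‖𝟙_{0}‖_p = 1`, the improving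
inequality then gives `N^{1/q - 1} ≤ C N^{-d(1/p - 1/q)}` for all `N`, which forces
`1/q - 1 ≤ -d(1/p - 1/q)`.
-/

lemma lpNormR_indicator_singleton {p : ℝ} (hp : 0 < p) (a : ℤ) :
    lpNormR p (Set.indicator {a} 1) = 1 := by
  rw [lpNormR, tsum_eq_single a fun x hx => by simp [hx, Real.zero_rpow hp.ne']]
  simp

lemma Nat.self_le_rpow_of_one_le {q : ℝ} (hq : 1 ≤ q) (n : ℕ) : (n : ℝ) ≤ (n : ℝ) ^ q := by
  rcases n.eq_zero_or_pos with rfl | hn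
  · simp [Real.zero_rpow (by linarith : q ≠ 0)]
  · exact Real.self_le_rpow_of_one_le (by exact_mod_cast hn) hq

lemma avgR_indicator_zero_apply (P : Polynomial ℤ) (N : ℕ) (x : ℤ) :
    avgR P N (Set.indicator {0} 1) x = #{k ∈ Icc (1 : ℤ) N | -P.eval k = x} / N := by
  rw [avgR, div_eq_inv_mul, ← sum_boole]
  refine congrArg _ (sum_congr rfl fun k _ => ?_)
  simp only [Set.indicator_apply, Set.mem_singleton_iff, Pi.one_apply, neg_eq_iff_add_eq_zero,
    add_comm x]

theorem rpow_le_lpNormR_avgR_indicator_zero (P : Polynomial ℤ) {q : ℝ} (hq : 1 ≤ q) {N : ℕ}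
    (hN : 1 ≤ N) :
    (N : ℝ) ^ (1 / q - 1) ≤ lpNormR q (avgR P N (Set.indicator {0} 1)) := by
  have hN0 : (0 : ℝ) < N := by exact_mod_cast hN
  set c : ℤ → ℕ := fun x => #{k ∈ Icc (1 : ℤ) N | -P.eval k = x}
  set T := (Icc (1 : ℤ) N).image fun k => -P.eval k
  have hsum : ∑ x ∈ T, (c x : ℝ) = N := by
    rw [← Nat.cast_sum, ← card_eq_sum_card_image, Int.card_Icc]
    simp
  have htsum : ∑' x, |avgR P N (Set.indicator {0} 1) x| ^ q
      = (∑ x ∈ T, (c x : ℝ) ^ q) / (N : ℝ) ^ q := by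
    rw [tsum_eq_sum (s := T), sum_div]
    · refine sum_congr rfl fun x _ => ?_
      rw [avgR_indicator_zero_apply, abs_of_nonneg (by positivity),
        Real.div_rpow (by positivity) hN0.le]
    · intro x hx
      have hempty : {k ∈ Icc (1 : ℤ) N | -P.eval k = x} = ∅ :=
        filter_eq_empty_iff.mpr fun k hk (hkx : -P.eval k = x) => hx (hkx ▸ mem_image_of_mem _ hk)
      rw [avgR_indicator_zero_apply, hempty]
      simp [Real.zero_rpow (by linarith : q ≠ 0)]
  calc (N : ℝ) ^ (1 / q - 1) = ((N : ℝ) / (N : ℝ) ^ q) ^ (1 / q) := by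
        rw [Real.div_rpow hN0.le (by positivity), ← Real.rpow_mul hN0.le,
          mul_one_div_cancel (by linarith), Real.rpow_one, Real.rpow_sub hN0, Real.rpow_one]
    _ ≤ ((∑ x ∈ T, (c x : ℝ) ^ q) / (N : ℝ) ^ q) ^ (1 / q) := by
        gcongr
        rw [← hsum]
        exact sum_le_sum fun x _ => Nat.self_le_rpow_of_one_le hq _
    _ = lpNormR q (avgR P N (Set.indicator {0} 1)) := by rw [lpNormR, htsum]

lemma le_of_forall_rpow_le_mul_rpow {a b C : ℝ}
    (h : ∀ N : ℕ, 1 ≤ N → (N : ℝ) ^ a ≤ C * (N : ℝ) ^ b) : a ≤ b := by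
  by_contra! hab
  have htend : Tendsto (fun N : ℕ => (N : ℝ) ^ (a - b)) atTop atTop :=
    (tendsto_rpow_atTop (sub_pos.mpr hab)).comp tendsto_natCast_atTop_atTop
  obtain ⟨N, hCN, hN⟩ := ((htend.eventually_gt_atTop C).and (eventually_ge_atTop 1)).exists
  have hN0 : (0 : ℝ) < N := by exact_mod_cast hN
  refine hCN.not_ge ?_
  rw [Real.rpow_sub hN0, div_le_iff₀ (Real.rpow_pos_of_pos hN0 b)]
  exact h N hN

theorem stmt_5_general (d : ℕ) (P : Polynomial ℤ) (p q : ℝ) (hp : 1 ≤ p) (hq : 1 ≤ q) :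
    -- lower bound with f = indicator of {0}
    (∀ N : ℕ, 1 ≤ N →
      (N : ℝ) ^ (1 / q - 1) ≤ lpNormR q (avgR P N (Set.indicator {(0 : ℤ)} 1))) ∧
    -- consequence: necessity of (d-1)/q ≥ d/p - 1 for the improving inequality
    ((∃ C : ℝ, ∀ N : ℕ, 1 ≤ N → ∀ f : ℤ → ℝ, (Function.support f).Finite →
        lpNormR q (avgR P N f) ≤ C * (N : ℝ) ^ (-((d : ℝ) * (1 / p - 1 / q))) * lpNormR p f) →
      (d : ℝ) / p - 1 ≤ ((d : ℝ) - 1) / q) := by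
  have hlower N (hN : 1 ≤ N) := rpow_le_lpNormR_avgR_indicator_zero P hq hN
  refine ⟨hlower, fun ⟨C, hC⟩ => ?_⟩
  have hexp : 1 / q - 1 ≤ -((d : ℝ) * (1 / p - 1 / q)) := by
    refine le_of_forall_rpow_le_mul_rpow (C := C) fun N hN => (hlower N hN).trans ?_
    have h := hC N hN (Set.indicator {0} 1)
      ((Set.finite_singleton 0).subset Set.support_indicator_subset)
    rwa [lpNormR_indicator_singleton (by linarith : (0 : ℝ) < p), mul_one] at h
  have hd_div_p : (d : ℝ) / p = d * (1 / p) := by ring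
  have hd_div_q : ((d : ℝ) - 1) / q = d * (1 / q) - 1 / q := by ring
  rw [hd_div_p, hd_div_q]
  linarith

theorem stmt_5 (d : ℕ) (hd : 1 ≤ d) (P : Polynomial ℤ) (hdeg : P.natDegree = d)
    (hlead : 0 < P.leadingCoeff) (p q : ℝ) (hp : 1 ≤ p) (hq : 1 ≤ q) :
    -- lower bound with f = indicator of {0}
    (∀ N : ℕ, 1 ≤ N →
      (N : ℝ) ^ (1 / q - 1) ≤ lpNormR q (avgR P N (Set.indicator {(0 : ℤ)} 1))) ∧
    -- consequence: necessity of (d-1)/q ≥ d/p - 1 for the improving inequality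
    ((∃ C : ℝ, ∀ N : ℕ, 1 ≤ N → ∀ f : ℤ → ℝ, (Function.support f).Finite →
        lpNormR q (avgR P N f) ≤ C * (N : ℝ) ^ (-((d : ℝ) * (1 / p - 1 / q))) * lpNormR p f) →
      (d : ℝ) / p - 1 ≤ ((d : ℝ) - 1) / q) :=
  stmt_5_general d P p q hp hq
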